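/- Let n ≥ 1 and let m : {0,1}^n → ℕ with total mass m̄ = ∑_{l} m(l). For s ∈ {1,…,n}, let I_s (resp. J_s) be the set of labels whose s-th bit is 1 (resp. 0), let flip_s change the s-th bit of a label, set S₁(s) = ∑_{i∈I_s} m(i), S₀(s) = ∑_{j∈J_s} m(j), assume S₁(s) > 0 and S₀(s) > 0, and set ρ_s = S₁(s)/S₀(s). Suppose n ≤ (ρ_s+1)²/(2ρ_s) for every s. Then for every s, 2n · (∑_{i∈I_s} ∑_{j∈J_s} m(i)·m(j)) · H_{m̄² − ∑_{i∈I_s}(m(i)+m(flip_s(i)))²} ≤ m̄² · H_{m̄² − ∑_{l} m(l)²}, where H_k denotes the k-th harmonic number (with H_0 = 0). Consequently the maximum over s of the left-hand side is at most the right-hand side, i.e., the iterative-training bound E₂ does not exceed the random-pair expectation E₁. -/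
import Mathlib


open Finset

/-- The `k`-th harmonic number `H_k = 1/1 + 1/2 + ⋯ + 1/k` (with `H_0 = 0`). -/
noncomputable def harmonicNumber (k : ℕ) : ℝ :=
  ∑ j ∈ Finset.range k, (1 : ℝ) / (j + 1)

lemma harmonicNumber_nonneg (k : ℕ) : 0 ≤ harmonicNumber k := by
  apply Finset.sum_nonneg
  intro j _
  positivity

lemma harmonicNumber_mono {k k' : ℕ} (h : k ≤ k') :
    harmonicNumber k ≤ harmonicNumber k' := by
  apply Finset.sum_le_sum_of_subset_of_nonneg
  · exact Finset.range_subset_range.mpr h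
  · intro j _ _
    positivity

/-- The iterative-training bound does not exceed the random-pair expectation: under the
balancedness criterion `n ≤ (ρ_s+1)²/(2ρ_s)` for all `s`, for every `s`,
`2n·(∑_{i∈I_s,j∈J_s} m i · m j)·H_{m̄² − ∑_{i∈I_s}(m i + m (flip_s i))²}
  ≤ m̄² · H_{m̄² − ∑_l (m l)²}`. -/
theorem iterative_training_bound (n : ℕ) (hn : 1 ≤ n)
    (m : (Fin n → Bool) → ℕ)
    (mbar : ℕ) (hmbar : mbar = ∑ l : Fin n → Bool, m l)
    (S₁ S₀ : Fin n → ℕ)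
    (hS₁ : ∀ s, S₁ s = ∑ l ∈ univ.filter (fun l : Fin n → Bool => l s = true), m l)
    (hS₀ : ∀ s, S₀ s = ∑ l ∈ univ.filter (fun l : Fin n → Bool => l s = false), m l)
    (hS₁pos : ∀ s, 0 < S₁ s) (hS₀pos : ∀ s, 0 < S₀ s)
    (ρ : Fin n → ℝ) (hρ : ∀ s, ρ s = (S₁ s : ℝ) / (S₀ s : ℝ))
    (hcrit : ∀ s, (n : ℝ) ≤ (ρ s + 1) ^ 2 / (2 * ρ s)) :
    ∀ s : Fin n,
      2 * (n : ℝ) *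
          (∑ i ∈ univ.filter (fun l : Fin n → Bool => l s = true),
            ∑ j ∈ univ.filter (fun l : Fin n → Bool => l s = false), (m i : ℝ) * (m j : ℝ)) *
          harmonicNumber
            (mbar ^ 2 -
              ∑ i ∈ univ.filter (fun l : Fin n → Bool => l s = true),
                (m i + m (Function.update i s (!(i s)))) ^ 2) ≤
        (mbar : ℝ) ^ 2 *
          harmonicNumber (mbar ^ 2 - ∑ l : Fin n → Bool, (m l) ^ 2) := by
  intro s
  set I := univ.filter (fun l : Fin n → Bool => l s = true) with hI
  set J := univ.filter (fun l : Fin n → Bool => l s = false) with hJ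
  -- the double sum equals S₁ s * S₀ s
  have hsum : (∑ i ∈ I, ∑ j ∈ J, (m i : ℝ) * (m j : ℝ)) = (S₁ s : ℝ) * (S₀ s : ℝ) := by
    rw [hS₁ s, hS₀ s, ← Finset.sum_mul_sum]
    push_cast
    rfl
  -- S₁ + S₀ = mbar
  have hsplit : S₁ s + S₀ s = mbar := by
    rw [hS₁ s, hS₀ s, hmbar]
    have h2 : univ.filter (fun l : Fin n → Bool => l s = false)
        = univ.filter (fun l : Fin n → Bool => ¬ (l s = true)) := by
      apply Finset.filter_congr
      intro l _
      simp
    rw [h2]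
    exact Finset.sum_filter_add_sum_filter_not _ _ _
  -- 2 n S₁ S₀ ≤ mbar²
  have hs1 : (0:ℝ) < (S₁ s : ℝ) := by exact_mod_cast hS₁pos s
  have hs0 : (0:ℝ) < (S₀ s : ℝ) := by exact_mod_cast hS₀pos s
  have hρpos : 0 < ρ s := by rw [hρ s]; positivity
  have hkey : 2 * (n : ℝ) * ((S₁ s : ℝ) * (S₀ s : ℝ)) ≤ (mbar : ℝ) ^ 2 := by
    have hc := hcrit s
    rw [hρ s] at hc
    have hmb : (mbar : ℝ) = (S₁ s : ℝ) + (S₀ s : ℝ) := by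
      rw [← hsplit]; push_cast; ring
    have hB : (0:ℝ) < 2 * ((S₁ s : ℝ) / (S₀ s : ℝ)) := by positivity
    have hc2 := (le_div_iff₀ hB).mp hc
    rw [hmb]
    have hd : ((S₁ s : ℝ) / (S₀ s : ℝ) + 1) ^ 2
        = ((S₁ s : ℝ) + (S₀ s : ℝ)) ^ 2 / (S₀ s : ℝ) ^ 2 := by
      field_simp
    rw [hd] at hc2
    have := mul_le_mul_of_nonneg_right hc2 (le_of_lt (by positivity : (0:ℝ) < (S₀ s:ℝ)^2))
    calc 2 * (n : ℝ) * ((S₁ s : ℝ) * (S₀ s : ℝ))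
        = (n : ℝ) * (2 * ((S₁ s : ℝ) / (S₀ s : ℝ))) * (S₀ s : ℝ)^2 := by
          field_simp
      _ ≤ ((S₁ s : ℝ) + (S₀ s : ℝ)) ^ 2 / (S₀ s : ℝ) ^ 2 * (S₀ s : ℝ)^2 := this
      _ = ((S₁ s : ℝ) + (S₀ s : ℝ)) ^ 2 := by field_simp
  -- harmonic argument comparison
  have hsq : (∑ l : Fin n → Bool, (m l) ^ 2)
      ≤ ∑ i ∈ I, (m i + m (Function.update i s (!(i s)))) ^ 2 := by
    have hpart : (∑ l : Fin n → Bool, (m l) ^ 2)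
        = (∑ i ∈ I, (m i) ^ 2) + ∑ j ∈ J, (m j) ^ 2 := by
      have h2 : univ.filter (fun l : Fin n → Bool => l s = false)
          = univ.filter (fun l : Fin n → Bool => ¬ (l s = true)) := by
        apply Finset.filter_congr; intro l _; simp
      rw [hI, hJ, h2]
      exact (Finset.sum_filter_add_sum_filter_not _ _ _).symm
    have hbij : (∑ j ∈ J, (m j) ^ 2)
        = ∑ i ∈ I, (m (Function.update i s (!(i s)))) ^ 2 := by
      apply Finset.sum_nbij' (fun j => Function.update j s (!(j s)))
        (fun i => Function.update i s (!(i s)))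
      · intro a ha
        simp only [hJ, Finset.mem_filter, Finset.mem_univ, true_and] at ha
        simp [hI, ha]
      · intro a ha
        simp only [hI, Finset.mem_filter, Finset.mem_univ, true_and] at ha
        simp [hJ, ha]
      · intro a _
        funext t
        by_cases ht : t = s
        · subst ht; simp
        · simp [Function.update_of_ne ht]
      · intro a _
        funext t
        by_cases ht : t = s
        · subst ht; simp
        · simp [Function.update_of_ne ht]
      · intro a ha
        simp only [hJ, Finset.mem_filter, Finset.mem_univ, true_and] at ha
        congr 2
        funext t
        by_cases ht : t = s
        · subst ht; simp
        · simp [Function.update_of_ne ht]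
    rw [hpart, hbij]
    rw [← Finset.sum_add_distrib]
    apply Finset.sum_le_sum
    intro i _
    nlinarith [Nat.zero_le (m i * m (Function.update i s (!(i s))))]
  have hH : harmonicNumber
      (mbar ^ 2 - ∑ i ∈ I, (m i + m (Function.update i s (!(i s)))) ^ 2)
      ≤ harmonicNumber (mbar ^ 2 - ∑ l : Fin n → Bool, (m l) ^ 2) :=
    harmonicNumber_mono (Nat.sub_le_sub_left hsq _)
  rw [hsum]
  apply mul_le_mul hkey hH (harmonicNumber_nonneg _) (by positivity)
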